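/- arXiv:2603.14340 — 3 statements merged into one kernel-verified Lean document; each statement's English description precedes it below -/
import Mathlib

section
/- For every integer k ≥ 1 and all smooth u, v : ℝ × ℝ^{n+1} → ℝ one has, identically, Σ_{i=0}^n x^i·( t·Δ̃^k(u·∂_{x^i}v) + x^i·Δ̃^k(u·∂_t v) ) = t·Δ̃^k( u·(Xv − k·v) ) − k·t·Δ̃^{k−1}( u·Δ̃v − v·Δ̃u ) + Q·Δ̃^k( u·∂_t v ). (Since the metric gradients with respect to g̃ are ∇̃x^i = ∂_{x^i} and ∇̃t = −∂_t, this is the paper's identity Σ x̃^i( t̃Δ̃^k(ũ(∇̃x̃^i)ṽ) − x̃^iΔ̃^k(ũ(∇̃t̃)ṽ) ) = t̃Δ̃^k(ũ(X−k)ṽ) − kt̃Δ̃^{k−1}(ũΔ̃ṽ − ṽΔ̃ũ) − QΔ̃^k(ũ(∇̃t̃)ṽ).) -/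
/-- The flat Fefferman–Graham ambient space `ℝ × ℝ^{n+1}` of the standard conformal
`n`-sphere, with coordinates `(t, x⁰, …, xⁿ)`. -/
abbrev Amb (n : ℕ) : Type := ℝ × (Fin (n+1) → ℝ)

/-- The partial derivative `∂_t`. -/
noncomputable def ptD {n : ℕ} (f : Amb n → ℝ) (p : Amb n) : ℝ :=
  fderiv ℝ f p (1, 0)

/-- The partial derivative `∂_{xⁱ}`. -/
noncomputable def pxD {n : ℕ} (i : Fin (n+1)) (f : Amb n → ℝ) (p : Amb n) : ℝ :=
  fderiv ℝ f p (0, Pi.single i 1)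

/-- The flat ambient Laplacian `Δ̃f = ∂_t²f − Σᵢ ∂_{xⁱ}²f` (convention `Δ ≥ 0` for the
metric `g̃ = −dt² + Σᵢ (dxⁱ)²`). -/
noncomputable def LapA {n : ℕ} (f : Amb n → ℝ) : Amb n → ℝ :=
  fun p => ptD (fun q => ptD f q) p - ∑ i, pxD i (fun q => pxD i f q) p

/-- The Euler (dilation) operator `Xf = t∂_t f + Σᵢ xⁱ∂_{xⁱ} f`. -/
noncomputable def EulerA {n : ℕ} (f : Amb n → ℝ) (p : Amb n) : ℝ :=
  p.1 * ptD f p + ∑ i, p.2 i * pxD i f p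

/-- The function `Q(t,x) = |x|² − t²`. -/
def QA {n : ℕ} (p : Amb n) : ℝ := (∑ i, (p.2 i)^2) - p.1^2

/-- The half-space `{(t,x) : t > 0}`. -/
def HS (n : ℕ) : Set (Amb n) := {p | 0 < p.1}

/-!
Multiplication by a linear function `ℓ` commutes with `Δ̃` up to a constant-coefficient
first-order operator: `Δ̃(ℓ f) = ℓ Δ̃f − 2 ∂_{∇̃ℓ} f`, and `∂_{∇̃ℓ}` commutes with `Δ̃`, so
`Δ̃^k(ℓ f) = ℓ Δ̃^k f − 2k Δ̃^{k−1} ∂_{∇̃ℓ} f`, where `∇̃t = −∂_t` and `∇̃xⁱ = ∂_{xⁱ}`.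
Expanding `u (Xv − kv) = t·(u ∂_t v) + Σᵢ xⁱ·(u ∂_{xⁱ} v) − k uv` this way, the first-order
remainders combine with `−k Δ̃^k(uv)` into `k Δ̃^{k−1}` applied to
`2∂_t(u ∂_t v) − 2Σᵢ ∂_{xⁱ}(u ∂_{xⁱ} v) − Δ̃(uv) = u Δ̃v − v Δ̃u`, the product rule for `Δ̃`.
What is left is `(t² + Q) Δ̃^k(u ∂_t v) = |x|² Δ̃^k(u ∂_t v)`.
-/

open scoped ContDiff

section DirDeriv

variable {E : Type*} [NormedAddCommGroup E] [NormedSpace ℝ E]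

noncomputable def dirDeriv (w : E) (f : E → ℝ) : E → ℝ := fun p => fderiv ℝ f p w

variable {f g : E → ℝ}

theorem ContDiff.dirDeriv (hf : ContDiff ℝ ∞ f) (w : E) : ContDiff ℝ ∞ (dirDeriv w f) :=
  (hf.fderiv_right ENat.coe_top_add_one.le).clm_apply contDiff_const

theorem dirDeriv_neg (w : E) (f : E → ℝ) : dirDeriv (-w) f = fun p => -dirDeriv w f p := by
  funext p; simp [dirDeriv]

theorem dirDeriv_add (hf : Differentiable ℝ f) (hg : Differentiable ℝ g) (w : E) :
    dirDeriv w (fun q => f q + g q) = fun p => dirDeriv w f p + dirDeriv w g p := by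
  funext p; simp [dirDeriv, fderiv_fun_add (hf p) (hg p)]

theorem dirDeriv_sub (hf : Differentiable ℝ f) (hg : Differentiable ℝ g) (w : E) :
    dirDeriv w (fun q => f q - g q) = fun p => dirDeriv w f p - dirDeriv w g p := by
  funext p; simp [dirDeriv, fderiv_fun_sub (hf p) (hg p)]

theorem dirDeriv_const_mul (hf : Differentiable ℝ f) (c : ℝ) (w : E) :
    dirDeriv w (fun q => c * f q) = fun p => c * dirDeriv w f p := by
  funext p; simp [dirDeriv, fderiv_const_mul (hf p) c]

theorem dirDeriv_sum {ι : Type*} {s : Finset ι} {F : ι → E → ℝ}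
    (hF : ∀ i, Differentiable ℝ (F i)) (w : E) :
    dirDeriv w (fun q => ∑ i ∈ s, F i q) = fun p => ∑ i ∈ s, dirDeriv w (F i) p := by
  funext p; simp [dirDeriv, fderiv_fun_sum fun i _ => hF i p]

theorem dirDeriv_mul (hf : Differentiable ℝ f) (hg : Differentiable ℝ g) (w : E) :
    dirDeriv w (fun q => f q * g q) = fun p => f p * dirDeriv w g p + g p * dirDeriv w f p := by
  funext p; simp [dirDeriv, fderiv_fun_mul (hf p) (hg p)]

theorem dirDeriv_clm_mul (ℓ : E →L[ℝ] ℝ) (hf : Differentiable ℝ f) (w : E) :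
    dirDeriv w (fun q => ℓ q * f q) = fun p => ℓ p * dirDeriv w f p + ℓ w * f p := by
  rw [dirDeriv_mul ℓ.differentiable hf]
  funext p; simp [dirDeriv, mul_comm]

theorem dirDeriv_dirDeriv_clm_mul (ℓ : E →L[ℝ] ℝ) (w : E) (hf : Differentiable ℝ f)
    (hf' : Differentiable ℝ (dirDeriv w f)) :
    dirDeriv w (dirDeriv w (fun q => ℓ q * f q)) =
      fun p => ℓ p * dirDeriv w (dirDeriv w f) p + 2 * ℓ w * dirDeriv w f p := by
  rw [dirDeriv_clm_mul ℓ hf, dirDeriv_add (by fun_prop) (by fun_prop), dirDeriv_clm_mul ℓ hf',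
    dirDeriv_const_mul hf]
  funext p; ring

theorem dirDeriv_dirDeriv_mul (w : E) (hf : Differentiable ℝ f) (hg : Differentiable ℝ g)
    (hf' : Differentiable ℝ (dirDeriv w f)) (hg' : Differentiable ℝ (dirDeriv w g)) :
    dirDeriv w (dirDeriv w (fun q => f q * g q)) =
      fun p => 2 * dirDeriv w (fun q => f q * dirDeriv w g q) p
        - f p * dirDeriv w (dirDeriv w g) p + g p * dirDeriv w (dirDeriv w f) p := by
  rw [dirDeriv_mul hf hg, dirDeriv_add (by fun_prop) (by fun_prop), dirDeriv_mul hf hg',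
    dirDeriv_mul hg hf']
  funext p; ring

theorem dirDeriv_comm (hf : ContDiff ℝ 2 f) (w w' : E) :
    dirDeriv w (dirDeriv w' f) = dirDeriv w' (dirDeriv w f) := by
  funext p
  have hdiff : Differentiable ℝ (fderiv ℝ f) :=
    (hf.fderiv_right le_rfl).differentiable one_ne_zero
  have hsecond : ∀ a b : E, dirDeriv a (dirDeriv b f) p = fderiv ℝ (fderiv ℝ f) p a b := by
    intro a b
    change fderiv ℝ (fun q => fderiv ℝ f q b) p a = _
    simp [fderiv_clm_apply (hdiff p) (differentiableAt_const b)]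
  rw [hsecond, hsecond]
  exact hf.contDiffAt.isSymmSndFDerivAt (by simp [minSmoothness_of_isRCLikeNormedField]) w w'

end DirDeriv

section Laplacian

variable {n : ℕ} {f g : Amb n → ℝ}

theorem lapA_eq (f : Amb n → ℝ) :
    LapA f = fun p => dirDeriv (1, 0) (dirDeriv (1, 0) f) p
      - ∑ i, dirDeriv (0, Pi.single i 1) (dirDeriv (0, Pi.single i 1) f) p :=
  rfl

theorem ContDiff.lapA (hf : ContDiff ℝ ∞ f) : ContDiff ℝ ∞ (LapA f) :=
  ((hf.dirDeriv _).dirDeriv _).sub (ContDiff.sum fun _ _ => (hf.dirDeriv _).dirDeriv _)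

theorem lapA_add (hf : ContDiff ℝ ∞ f) (hg : ContDiff ℝ ∞ g) :
    LapA (fun q => f q + g q) = fun p => LapA f p + LapA g p := by
  have hf' := fun w => (hf.dirDeriv w).differentiable (by simp)
  have hg' := fun w => (hg.dirDeriv w).differentiable (by simp)
  simp only [lapA_eq, dirDeriv_add (hf.differentiable (by simp)) (hg.differentiable (by simp)),
    dirDeriv_add (hf' _) (hg' _)]
  funext p
  rw [Finset.sum_add_distrib]
  ring

theorem lapA_sub (hf : ContDiff ℝ ∞ f) (hg : ContDiff ℝ ∞ g) :
    LapA (fun q => f q - g q) = fun p => LapA f p - LapA g p := by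
  have hf' := fun w => (hf.dirDeriv w).differentiable (by simp)
  have hg' := fun w => (hg.dirDeriv w).differentiable (by simp)
  simp only [lapA_eq, dirDeriv_sub (hf.differentiable (by simp)) (hg.differentiable (by simp)),
    dirDeriv_sub (hf' _) (hg' _)]
  funext p
  rw [Finset.sum_sub_distrib]
  ring

theorem lapA_const_mul (hf : ContDiff ℝ ∞ f) (c : ℝ) :
    LapA (fun q => c * f q) = fun p => c * LapA f p := by
  simp only [lapA_eq, dirDeriv_const_mul (hf.differentiable (by simp)),
    dirDeriv_const_mul ((hf.dirDeriv _).differentiable (by simp))]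
  funext p
  rw [← Finset.mul_sum]
  ring

theorem lapA_sum {ι : Type*} {s : Finset ι} {F : ι → Amb n → ℝ}
    (hF : ∀ i, ContDiff ℝ ∞ (F i)) :
    LapA (fun q => ∑ i ∈ s, F i q) = fun p => ∑ i ∈ s, LapA (F i) p := by
  simp only [lapA_eq, dirDeriv_sum fun i => (hF i).differentiable (by simp),
    dirDeriv_sum fun i => ((hF i).dirDeriv _).differentiable (by simp)]
  funext p
  rw [Finset.sum_comm (s := Finset.univ), ← Finset.sum_sub_distrib]

theorem dirDeriv_lapA (hf : ContDiff ℝ ∞ f) (w : Amb n) :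
    dirDeriv w (LapA f) = LapA (dirDeriv w f) := by
  have hf₂ : ContDiff ℝ 2 f := hf.of_le (by norm_cast)
  have hf₂' : ∀ w', ContDiff ℝ 2 (dirDeriv w' f) :=
    fun w' => (hf.dirDeriv w').of_le (by norm_cast)
  rw [lapA_eq, dirDeriv_sub (((hf.dirDeriv _).dirDeriv _).differentiable (by simp))
    ((ContDiff.sum fun _ _ => (hf.dirDeriv _).dirDeriv _).differentiable (by simp)),
    dirDeriv_sum fun _ => ((hf.dirDeriv _).dirDeriv _).differentiable (by simp)]
  simp only [dirDeriv_comm (hf₂' _) w, dirDeriv_comm hf₂ w]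
  rfl

theorem dirDeriv_eq_sum_basis (w : Amb n) (f : Amb n → ℝ) :
    dirDeriv w f = fun p => w.1 * dirDeriv (1, 0) f p
      + ∑ i, w.2 i * dirDeriv (0, Pi.single i 1) f p := by
  funext p
  have h₁ : ((w.1, 0) : Amb n) = w.1 • (1, 0) := by simp
  have h₂ : ((0, w.2) : Amb n) = ∑ i, w.2 i • (0, Pi.single i 1) := by
    ext <;> simp [Prod.fst_sum, Prod.snd_sum, Pi.single_apply]
  calc fderiv ℝ f p w = fderiv ℝ f p (w.1, 0) + fderiv ℝ f p (0, w.2) := by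
        rw [← map_add]; simp
    _ = _ := by
        rw [h₁, h₂, map_smul, map_sum]
        simp only [map_smul, smul_eq_mul]
        rfl

/-- The `g̃`-gradient of a linear function `ℓ`: `g̃(gradA ℓ, ·) = ℓ` for
`g̃ = −dt² + Σᵢ (dxⁱ)²`. -/
def gradA (ℓ : Amb n →L[ℝ] ℝ) : Amb n := (-ℓ (1, 0), fun i => ℓ (0, Pi.single i 1))

theorem lapA_clm_mul (ℓ : Amb n →L[ℝ] ℝ) (hf : ContDiff ℝ ∞ f) :
    LapA (fun q => ℓ q * f q) = fun p => ℓ p * LapA f p - 2 * dirDeriv (gradA ℓ) f p := by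
  rw [dirDeriv_eq_sum_basis (gradA ℓ)]
  simp only [lapA_eq, dirDeriv_dirDeriv_clm_mul ℓ _ (hf.differentiable (by simp))
    ((hf.dirDeriv _).differentiable (by simp)), gradA]
  funext p
  simp only [Finset.sum_add_distrib, mul_sub, mul_add, Finset.mul_sum, mul_assoc]
  ring

end Laplacian

section Iterates

variable {n : ℕ} {f g : Amb n → ℝ}

theorem ContDiff.iterate_lapA (hf : ContDiff ℝ ∞ f) (k : ℕ) : ContDiff ℝ ∞ (LapA^[k] f) := by
  induction k with
  | zero => exact hf
  | succ k ih => rw [Function.iterate_succ_apply']; exact ih.lapA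

theorem iterate_lapA_add (hf : ContDiff ℝ ∞ f) (hg : ContDiff ℝ ∞ g) (k : ℕ) :
    LapA^[k] (fun q => f q + g q) = fun p => LapA^[k] f p + LapA^[k] g p := by
  induction k generalizing f g with
  | zero => rfl
  | succ k ih => simp only [Function.iterate_succ_apply, lapA_add hf hg, ih hf.lapA hg.lapA]

theorem iterate_lapA_sub (hf : ContDiff ℝ ∞ f) (hg : ContDiff ℝ ∞ g) (k : ℕ) :
    LapA^[k] (fun q => f q - g q) = fun p => LapA^[k] f p - LapA^[k] g p := by
  induction k generalizing f g with
  | zero => rfl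
  | succ k ih => simp only [Function.iterate_succ_apply, lapA_sub hf hg, ih hf.lapA hg.lapA]

theorem iterate_lapA_const_mul (hf : ContDiff ℝ ∞ f) (c : ℝ) (k : ℕ) :
    LapA^[k] (fun q => c * f q) = fun p => c * LapA^[k] f p := by
  induction k generalizing f with
  | zero => rfl
  | succ k ih => simp only [Function.iterate_succ_apply, lapA_const_mul hf, ih hf.lapA]

theorem iterate_lapA_neg (hf : ContDiff ℝ ∞ f) (k : ℕ) :
    LapA^[k] (fun q => -f q) = fun p => -LapA^[k] f p := by
  simpa using iterate_lapA_const_mul hf (-1) k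

theorem iterate_lapA_sum {ι : Type*} {s : Finset ι} {F : ι → Amb n → ℝ}
    (hF : ∀ i, ContDiff ℝ ∞ (F i)) (k : ℕ) :
    LapA^[k] (fun q => ∑ i ∈ s, F i q) = fun p => ∑ i ∈ s, LapA^[k] (F i) p := by
  induction k generalizing F with
  | zero => rfl
  | succ k ih =>
    simp only [Function.iterate_succ_apply, lapA_sum hF, ih fun i => (hF i).lapA]

theorem dirDeriv_iterate_lapA (hf : ContDiff ℝ ∞ f) (w : Amb n) (k : ℕ) :
    dirDeriv w (LapA^[k] f) = LapA^[k] (dirDeriv w f) := by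
  induction k generalizing f with
  | zero => rfl
  | succ k ih => simp only [Function.iterate_succ_apply, ih hf.lapA, dirDeriv_lapA hf]

theorem iterate_lapA_clm_mul (ℓ : Amb n →L[ℝ] ℝ) (hf : ContDiff ℝ ∞ f) (k : ℕ) :
    LapA^[k + 1] (fun q => ℓ q * f q) = fun p =>
      ℓ p * LapA^[k + 1] f p - 2 * (k + 1) * LapA^[k] (dirDeriv (gradA ℓ) f) p := by
  induction k with
  | zero => simpa using lapA_clm_mul ℓ hf
  | succ k ih =>
    rw [Function.iterate_succ_apply', ih, lapA_sub (ℓ.contDiff.mul (hf.iterate_lapA _))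
      (contDiff_const.mul ((hf.dirDeriv _).iterate_lapA _)),
      lapA_clm_mul ℓ (hf.iterate_lapA _), lapA_const_mul ((hf.dirDeriv _).iterate_lapA _),
      dirDeriv_iterate_lapA hf]
    funext p
    simp only [← Function.iterate_succ_apply' LapA]
    push_cast
    ring

theorem gradA_fst : gradA (ContinuousLinearMap.fst ℝ ℝ (Fin (n + 1) → ℝ)) = -(1, 0) := by
  ext <;> simp [gradA]

theorem gradA_coord (i : Fin (n + 1)) :
    gradA ((ContinuousLinearMap.proj i).comp (ContinuousLinearMap.snd ℝ ℝ (Fin (n + 1) → ℝ))) =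
      (0, Pi.single i 1) := by
  ext j
  · simp [gradA]
  · simp [gradA, Pi.single_apply, eq_comm]

theorem iterate_lapA_fst_mul (hf : ContDiff ℝ ∞ f) (k : ℕ) :
    LapA^[k + 1] (fun q => q.1 * f q) = fun p =>
      p.1 * LapA^[k + 1] f p + 2 * (k + 1) * LapA^[k] (ptD f) p := by
  have h := iterate_lapA_clm_mul (ContinuousLinearMap.fst ℝ ℝ (Fin (n + 1) → ℝ)) hf k
  rw [gradA_fst, dirDeriv_neg, iterate_lapA_neg (hf.dirDeriv _)] at h
  simp only [ContinuousLinearMap.coe_fst', mul_neg, sub_neg_eq_add] at h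
  exact h

theorem iterate_lapA_coord_mul (hf : ContDiff ℝ ∞ f) (i : Fin (n + 1)) (k : ℕ) :
    LapA^[k + 1] (fun q => q.2 i * f q) = fun p =>
      p.2 i * LapA^[k + 1] f p - 2 * (k + 1) * LapA^[k] (pxD i f) p := by
  have h := iterate_lapA_clm_mul
    ((ContinuousLinearMap.proj i).comp (ContinuousLinearMap.snd ℝ ℝ (Fin (n + 1) → ℝ))) hf k
  rw [gradA_coord] at h
  exact h

end Iterates

section Identity

variable {n : ℕ} {u v : Amb n → ℝ}

theorem lapA_mul (hu : ContDiff ℝ ∞ u) (hv : ContDiff ℝ ∞ v) :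
    LapA (fun q => u q * v q) = fun p =>
      2 * ptD (fun q => u q * ptD v q) p - 2 * ∑ i, pxD i (fun q => u q * pxD i v q) p
        - (u p * LapA v p - v p * LapA u p) := by
  have hu' := fun w => (hu.dirDeriv w).differentiable (by simp)
  have hv' := fun w => (hv.dirDeriv w).differentiable (by simp)
  simp only [lapA_eq, dirDeriv_dirDeriv_mul _ (hu.differentiable (by simp))
    (hv.differentiable (by simp)) (hu' _) (hv' _)]
  funext p
  simp only [Finset.sum_add_distrib, Finset.sum_sub_distrib, Finset.mul_sum, mul_sub]
  simp only [ptD, pxD, dirDeriv]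
  ring

theorem iterate_lapA_mul_euler (hu : ContDiff ℝ ∞ u) (hv : ContDiff ℝ ∞ v) (c : ℝ) (k : ℕ) :
    LapA^[k + 1] (fun q => u q * (EulerA v q - c * v q)) = fun p =>
      p.1 * LapA^[k + 1] (fun q => u q * ptD v q) p
        + 2 * (k + 1) * LapA^[k] (ptD fun q => u q * ptD v q) p
        + ∑ i, (p.2 i * LapA^[k + 1] (fun q => u q * pxD i v q) p
          - 2 * (k + 1) * LapA^[k] (pxD i fun q => u q * pxD i v q) p)
        - c * LapA^[k + 1] (fun q => u q * v q) p := by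
  have hW : ContDiff ℝ ∞ (fun q => u q * ptD v q) := hu.mul (hv.dirDeriv _)
  have hWi : ∀ i, ContDiff ℝ ∞ (fun q => u q * pxD i v q) := fun i => hu.mul (hv.dirDeriv _)
  have hsplit : (fun q => u q * (EulerA v q - c * v q)) = fun q =>
      (q.1 * (u q * ptD v q) + ∑ i, q.2 i * (u q * pxD i v q)) - c * (u q * v q) := by
    funext q
    simp only [EulerA, mul_sub, mul_add, Finset.mul_sum]
    ring_nf
  have hTW : ContDiff ℝ ∞ (fun q : Amb n => q.1 * (u q * ptD v q)) := by fun_prop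
  have hXW : ∀ i, ContDiff ℝ ∞ (fun q : Amb n => q.2 i * (u q * pxD i v q)) := by
    intro i; fun_prop
  rw [hsplit, iterate_lapA_sub (hTW.add (ContDiff.sum fun i _ => hXW i)) (by fun_prop),
    iterate_lapA_add hTW (ContDiff.sum fun i _ => hXW i), iterate_lapA_sum hXW,
    iterate_lapA_const_mul (hu.mul hv), iterate_lapA_fst_mul hW]
  simp only [iterate_lapA_coord_mul (hWi _)]

theorem iterate_lapA_mul_sub_mul (hu : ContDiff ℝ ∞ u) (hv : ContDiff ℝ ∞ v) (k : ℕ) :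
    LapA^[k] (fun q => u q * LapA v q - v q * LapA u q) = fun p =>
      2 * LapA^[k] (ptD fun q => u q * ptD v q) p
        - 2 * ∑ i, LapA^[k] (pxD i fun q => u q * pxD i v q) p
        - LapA^[k + 1] (fun q => u q * v q) p := by
  have hDW : ContDiff ℝ ∞ (ptD fun q => u q * ptD v q) := (hu.mul (hv.dirDeriv _)).dirDeriv _
  have hDWi : ∀ i, ContDiff ℝ ∞ (pxD i fun q => u q * pxD i v q) :=
    fun i => (hu.mul (hv.dirDeriv _)).dirDeriv _
  have hsplit : (fun q => u q * LapA v q - v q * LapA u q) = fun q =>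
      (2 * ptD (fun q => u q * ptD v q) q - 2 * ∑ i, pxD i (fun q => u q * pxD i v q) q)
        - LapA (fun q => u q * v q) q := by
    rw [lapA_mul hu hv]
    funext q
    ring
  rw [hsplit, iterate_lapA_sub (by fun_prop) (hu.mul hv).lapA,
    iterate_lapA_sub (by fun_prop) (by fun_prop), iterate_lapA_const_mul hDW,
    iterate_lapA_const_mul (ContDiff.sum fun i _ => hDWi i), iterate_lapA_sum hDWi,
    Function.iterate_succ_apply]

end Identity

theorem stmt_3_general (n k : ℕ) (hk : 1 ≤ k)
    (u v : Amb n → ℝ) (hu : ContDiff ℝ (⊤ : ℕ∞) u) (hv : ContDiff ℝ (⊤ : ℕ∞) v)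
    (p : Amb n) :
    ∑ i, p.2 i * (p.1 * LapA^[k] (fun q => u q * pxD i v q) p
        + p.2 i * LapA^[k] (fun q => u q * ptD v q) p)
      = p.1 * LapA^[k] (fun q => u q * (EulerA v q - (k:ℝ) * v q)) p
        - (k:ℝ) * p.1 * LapA^[k-1] (fun q => u q * LapA v q - v q * LapA u q) p
        + QA p * LapA^[k] (fun q => u q * ptD v q) p := by
  obtain ⟨k, rfl⟩ := Nat.exists_eq_add_of_le' hk
  simp only [Nat.add_sub_cancel, iterate_lapA_mul_euler hu hv, iterate_lapA_mul_sub_mul hu hv]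
  rw [Finset.sum_sub_distrib, ← Finset.mul_sum]
  have hlhs : ∑ i, p.2 i * (p.1 * LapA^[k + 1] (fun q => u q * pxD i v q) p
        + p.2 i * LapA^[k + 1] (fun q => u q * ptD v q) p)
      = p.1 * ∑ i, p.2 i * LapA^[k + 1] (fun q => u q * pxD i v q) p
        + (∑ i, p.2 i ^ 2) * LapA^[k + 1] (fun q => u q * ptD v q) p := by
    rw [Finset.mul_sum, Finset.sum_mul, ← Finset.sum_add_distrib]
    exact Finset.sum_congr rfl fun i _ => by ring
  rw [hlhs, QA]
  push_cast
  ring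

/-- Lemma 6.2, eqn (6.2): for every `k ≥ 1` and smooth `u, v`,
`Σᵢ xⁱ(t·Δ̃^k(u·∂_{xⁱ}v) + xⁱ·Δ̃^k(u·∂_t v))
  = t·Δ̃^k(u·(Xv − kv)) − k·t·Δ̃^{k−1}(u·Δ̃v − v·Δ̃u) + Q·Δ̃^k(u·∂_t v)`. -/
theorem stmt_3 (n k : ℕ) (hn : 1 ≤ n) (hk : 1 ≤ k)
    (u v : Amb n → ℝ) (hu : ContDiff ℝ (⊤ : ℕ∞) u) (hv : ContDiff ℝ (⊤ : ℕ∞) v)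
    (p : Amb n) :
    ∑ i, p.2 i * (p.1 * LapA^[k] (fun q => u q * pxD i v q) p
        + p.2 i * LapA^[k] (fun q => u q * ptD v q) p)
      = p.1 * LapA^[k] (fun q => u q * (EulerA v q - (k:ℝ) * v q)) p
        - (k:ℝ) * p.1 * LapA^[k-1] (fun q => u q * LapA v q - v q * LapA u q) p
        + QA p * LapA^[k] (fun q => u q * ptD v q) p :=
  stmt_3_general n k hk u v hu hv p
end

section
/- Fix integers n ≥ 1 and k ≥ 1. Let f be a smooth function on the half-space {(t,x) : t > 0} ⊂ ℝ × ℝ^{n+1} satisfying Xf = −((n−2k+2)/2)·f pointwise. Then at every point p with t(p) = 1 and |x(p)| = 1 one has: Σ_{i=0}^n x^i(p)·( t·Δ̃^k(x^i·f) − x^i·Δ̃^k(t·f) )(p) = k(n+2k−2)·(Δ̃^{k−1} f)(p). -/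
/-! For a linear function `ℓ`, `Δ̃(ℓ f) = ℓ Δ̃f + 2 ∂_v f` with the constant vector `v = ambGrad ℓ`,
and `∂_v` commutes with `Δ̃`; hence `Δ̃^k(ℓ f) = ℓ Δ̃^k f + 2k ∂_v Δ̃^{k-1} f`. For `ℓ = t` and
`ℓ = xⁱ` the vector `v` is `∂_t`, resp. `-∂_{xⁱ}`, so at a point with `t = 1`, `|x| = 1` the sum
collapses to `-2k X(Δ̃^{k-1} f)`. Finally `[Δ̃, X] = 2Δ̃` makes `Δ̃^{k-1} f` homogeneous of degree
`w - 2(k-1)`, where `w = -(n-2k+2)/2`, and `-2k(w - 2k + 2) = k(n+2k-2)`. -/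

open Set Filter Topology
open scoped ContDiff

section SecondDerivatives

variable {E : Type*} [NormedAddCommGroup E] [NormedSpace ℝ E] {f : E → ℝ} {p : E}

theorem fderiv_fderiv_apply_comm (hf : ContDiffAt ℝ 2 f p) (v w : E) :
    fderiv ℝ (fun q => fderiv ℝ f q w) p v = fderiv ℝ (fun q => fderiv ℝ f q v) p w := by
  have hd : DifferentiableAt ℝ (fderiv ℝ f) p :=
    (hf.fderiv_right (m := 1) le_rfl).differentiableAt one_ne_zero
  have hsym := hf.isSymmSndFDerivAt (by simp [minSmoothness_of_isRCLikeNormedField])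
  simp [fderiv_clm_apply hd (differentiableAt_const _), hsym v w]

theorem fderiv_fderiv_fderiv_apply_comm (hf : ContDiffAt ℝ 3 f p) (u v w : E) :
    fderiv ℝ (fun q => fderiv ℝ (fun r => fderiv ℝ f r w) q v) p u
      = fderiv ℝ (fun q => fderiv ℝ (fun r => fderiv ℝ f r u) q w) p v := by
  have hfw : ContDiffAt ℝ 2 (fun q => fderiv ℝ f q w) p :=
    (hf.fderiv_right (m := 2) le_rfl).clm_apply contDiffAt_const
  have hcomm : (fun q => fderiv ℝ (fun r => fderiv ℝ f r w) q u)
      =ᶠ[𝓝 p] fun q => fderiv ℝ (fun r => fderiv ℝ f r u) q w :=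
    (hf.eventually (by simp)).mono fun q hq => fderiv_fderiv_apply_comm (hq.of_le (by norm_num)) u w
  rw [fderiv_fderiv_apply_comm hfw, hcomm.fderiv_eq]

theorem fderiv_fderiv_clm_mul_apply (ℓ : E →L[ℝ] ℝ) (hf : ContDiffAt ℝ 2 f p) (v w : E) :
    fderiv ℝ (fun q => fderiv ℝ (fun r => ℓ r * f r) q w) p v
      = ℓ w * fderiv ℝ f p v + ℓ v * fderiv ℝ f p w
        + ℓ p * fderiv ℝ (fun q => fderiv ℝ f q w) p v := by
  have hprod : (fun q => fderiv ℝ (fun r => ℓ r * f r) q w)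
      =ᶠ[𝓝 p] fun q => ℓ w * f q + ℓ q * fderiv ℝ f q w :=
    (hf.eventually (by simp)).mono fun q hq => by
      simp only [fderiv_fun_mul ℓ.differentiableAt (hq.differentiableAt two_ne_zero),
        ContinuousLinearMap.fderiv, add_apply, smul_apply, smul_eq_mul]
      ring
  have hfw : DifferentiableAt ℝ (fun q => fderiv ℝ f q w) p :=
    ((hf.fderiv_right (m := 1) le_rfl).clm_apply contDiffAt_const).differentiableAt one_ne_zero
  rw [hprod.fderiv_eq, fderiv_fun_add ((hf.differentiableAt two_ne_zero).const_mul _)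
    (ℓ.differentiableAt.fun_mul hfw), fderiv_const_mul (hf.differentiableAt two_ne_zero),
    fderiv_fun_mul ℓ.differentiableAt hfw]
  simp only [ContinuousLinearMap.fderiv, add_apply, smul_apply, smul_eq_mul]
  ring

theorem ContDiffAt.fderiv_apply_const (hf : ContDiffAt ℝ ∞ f p) (v : E) :
    ContDiffAt ℝ ∞ (fun q => fderiv ℝ f q v) p :=
  (hf.fderiv_right le_rfl).clm_apply contDiffAt_const

end SecondDerivatives

section Ambient

variable {n : ℕ} {f g : Amb n → ℝ} {p : Amb n} {U : Set (Amb n)}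

theorem clm_apply_amb (L : Amb n →L[ℝ] ℝ) (v : Amb n) :
    L v = v.1 * L (1, 0) + ∑ i, v.2 i * L (0, Pi.single i 1) := by
  have hv : v = v.1 • ((1, 0) : Amb n) + ∑ i, v.2 i • ((0, Pi.single i 1) : Amb n) := by
    ext <;> simp [Prod.fst_sum, Prod.snd_sum, Finset.sum_apply, Pi.single_apply]
  conv_lhs => rw [hv]
  simp only [map_add, map_sum, map_smul, smul_eq_mul]

theorem LapA_eq_iteratedFDeriv (hf : ContDiffAt ℝ 2 f p) :
    LapA f p = iteratedFDeriv ℝ 2 f p ![(1, 0), (1, 0)]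
      - ∑ i, iteratedFDeriv ℝ 2 f p ![(0, Pi.single i 1), (0, Pi.single i 1)] := by
  have hd : DifferentiableAt ℝ (fderiv ℝ f) p :=
    (hf.fderiv_right (m := 1) le_rfl).differentiableAt one_ne_zero
  simp [LapA, ptD, pxD, iteratedFDeriv_two_apply, fderiv_clm_apply hd (differentiableAt_const _)]

theorem LapA_add (hf : ContDiffAt ℝ 2 f p) (hg : ContDiffAt ℝ 2 g p) :
    LapA (fun q => f q + g q) p = LapA f p + LapA g p := by
  rw [LapA_eq_iteratedFDeriv (hf.add hg), LapA_eq_iteratedFDeriv hf, LapA_eq_iteratedFDeriv hg,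
    fun_iteratedFDeriv_add_apply hf hg]
  simp only [add_apply, Finset.sum_add_distrib]
  ring

theorem LapA_sum {ι : Type*} {s : Finset ι} {F : ι → Amb n → ℝ}
    (hF : ∀ i ∈ s, ContDiffAt ℝ 2 (F i) p) :
    LapA (fun q => ∑ i ∈ s, F i q) p = ∑ i ∈ s, LapA (F i) p := by
  rw [LapA_eq_iteratedFDeriv (ContDiffAt.sum hF), iteratedFDeriv_fun_sum_apply hF,
    Finset.sum_congr rfl fun i hi => LapA_eq_iteratedFDeriv (hF i hi)]
  simp only [sum_apply, Finset.sum_sub_distrib, sub_right_inj]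
  rw [Finset.sum_comm]

theorem LapA_const_mul (c : ℝ) (hf : ContDiffAt ℝ 2 f p) :
    LapA (fun q => c * f q) p = c * LapA f p := by
  change LapA (fun q => c • f q) p = _
  rw [LapA_eq_iteratedFDeriv (hf.const_smul c), LapA_eq_iteratedFDeriv hf,
    iteratedFDeriv_const_smul_apply' hf]
  simp [Finset.mul_sum, mul_sub]

theorem Filter.EventuallyEq.LapA_eq (h : f =ᶠ[𝓝 p] g) : LapA f p = LapA g p := by
  have hd : ∀ v, (fun q => fderiv ℝ f q v) =ᶠ[𝓝 p] fun q => fderiv ℝ g q v :=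
    fun v => (h.fderiv (𝕜 := ℝ)).mono fun q hq => by simp only [hq]
  simp only [LapA, ptD, pxD, (hd _).fderiv_eq]

theorem contDiffAt_LapA (hf : ContDiffAt ℝ ∞ f p) : ContDiffAt ℝ ∞ (LapA f) p :=
  ((hf.fderiv_apply_const _).fderiv_apply_const _).sub
    (ContDiffAt.sum fun _ _ => (hf.fderiv_apply_const _).fderiv_apply_const _)

/-- Minus the `g̃`-gradient of `ℓ`, the sign matching the convention `Δ̃ ≥ 0`. -/
def ambGrad (ℓ : Amb n →L[ℝ] ℝ) : Amb n := (ℓ (1, 0), fun i => -ℓ (0, Pi.single i 1))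

theorem ambGrad_fst : ambGrad (ContinuousLinearMap.fst ℝ ℝ (Fin (n + 1) → ℝ)) = (1, 0) := by
  ext <;> simp [ambGrad]

theorem ambGrad_proj_comp_snd (i : Fin (n + 1)) :
    ambGrad ((ContinuousLinearMap.proj i).comp (ContinuousLinearMap.snd ℝ ℝ (Fin (n + 1) → ℝ)))
      = -(0, Pi.single i 1) := by
  ext j
  · simp [ambGrad]
  · by_cases h : j = i
    · subst h; simp [ambGrad]
    · simp [ambGrad, Pi.single_apply, h, Ne.symm h]

theorem LapA_clm_mul (ℓ : Amb n →L[ℝ] ℝ) (hf : ContDiffAt ℝ 2 f p) :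
    LapA (fun q => ℓ q * f q) p = ℓ p * LapA f p + 2 * fderiv ℝ f p (ambGrad ℓ) := by
  simp only [LapA, ptD, pxD, fderiv_fderiv_clm_mul_apply ℓ hf]
  rw [clm_apply_amb (fderiv ℝ f p) (ambGrad ℓ)]
  simp only [ambGrad, neg_mul, Finset.sum_add_distrib, Finset.sum_neg_distrib, ← Finset.mul_sum]
  ring

theorem LapA_fderiv_comm (hf : ContDiffAt ℝ 3 f p) (v : Amb n) :
    LapA (fun q => fderiv ℝ f q v) p = fderiv ℝ (LapA f) p v := by
  have hd : ∀ w, DifferentiableAt ℝ (fun q => fderiv ℝ (fun r => fderiv ℝ f r w) q w) p :=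
    fun w => (((hf.fderiv_right (m := 2) le_rfl).clm_apply contDiffAt_const).fderiv_right
      (m := 1) le_rfl |>.clm_apply contDiffAt_const).differentiableAt one_ne_zero
  have hLap : LapA f = fun q => fderiv ℝ (fun r => fderiv ℝ f r (1, 0)) q (1, 0)
      - ∑ i, fderiv ℝ (fun r => fderiv ℝ f r (0, Pi.single i 1)) q (0, Pi.single i 1) := rfl
  rw [hLap, fderiv_fun_sub (hd _) (DifferentiableAt.fun_sum fun _ _ => hd _),
    fderiv_fun_sum fun _ _ => hd _]
  simp only [LapA, ptD, pxD, sub_apply, FunLike.coe_sum, Finset.sum_apply,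
    fderiv_fderiv_fderiv_apply_comm hf v]

theorem LapA_EulerA (hf : ContDiffAt ℝ 3 f p) :
    LapA (EulerA f) p = EulerA (LapA f) p + 2 * LapA f p := by
  have hX : EulerA f = fun q => ContinuousLinearMap.fst ℝ ℝ (Fin (n + 1) → ℝ) q
      * fderiv ℝ f q (1, 0) + ∑ i, (ContinuousLinearMap.proj i).comp
        (ContinuousLinearMap.snd ℝ ℝ (Fin (n + 1) → ℝ)) q * fderiv ℝ f q (0, Pi.single i 1) := rfl
  have hd : ∀ v, ContDiffAt ℝ 2 (fun q => fderiv ℝ f q v) p :=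
    fun v => (hf.fderiv_right (m := 2) le_rfl).clm_apply contDiffAt_const
  have hmul : ∀ (ℓ : Amb n →L[ℝ] ℝ) v, ContDiffAt ℝ 2 (fun q => ℓ q * fderiv ℝ f q v) p :=
    fun ℓ v => ℓ.contDiff.contDiffAt.mul (hd v)
  rw [hX, LapA_add (hmul _ _) (ContDiffAt.sum fun i _ => hmul _ _), LapA_sum fun i _ => hmul _ _,
    LapA_clm_mul _ (hd _), ambGrad_fst]
  simp only [LapA_clm_mul _ (hd _), ambGrad_proj_comp_snd, map_neg, LapA_fderiv_comm hf]
  simp only [EulerA, LapA, ptD, pxD, ContinuousLinearMap.coe_fst', ContinuousLinearMap.coe_comp,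
    ContinuousLinearMap.coe_snd', Function.comp_apply, ContinuousLinearMap.proj_apply,
    mul_neg, Finset.sum_add_distrib, Finset.sum_neg_distrib, ← Finset.mul_sum]
  ring

theorem contDiffAt_iterate_LapA (hf : ContDiffAt ℝ ∞ f p) (m : ℕ) :
    ContDiffAt ℝ ∞ (LapA^[m] f) p :=
  Function.Iterate.rec (fun g => ContDiffAt ℝ ∞ g p) hf (fun _ => contDiffAt_LapA) m

theorem ContDiffOn.iterate_LapA (hU : IsOpen U) (hf : ContDiffOn ℝ ∞ f U) (m : ℕ) :
    ContDiffOn ℝ ∞ (LapA^[m] f) U :=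
  fun _ hq => (contDiffAt_iterate_LapA (hf.contDiffAt (hU.mem_nhds hq)) m).contDiffWithinAt

theorem EulerA_LapA_of_homogeneous (hU : IsOpen U) (hf : ContDiffOn ℝ ∞ f U) {c : ℝ}
    (hX : ∀ q ∈ U, EulerA f q = c * f q) :
    ∀ q ∈ U, EulerA (LapA f) q = (c - 2) * LapA f q := by
  intro q hq
  have hfq := hf.contDiffAt (hU.mem_nhds hq)
  have hLapX : LapA (EulerA f) q = c * LapA f q := by
    rw [(eventuallyEq_of_mem (hU.mem_nhds hq) hX).LapA_eq,
      LapA_const_mul c (hfq.of_le ENat.LEInfty.out)]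
  linarith [LapA_EulerA (hfq.of_le ENat.LEInfty.out)]

theorem EulerA_iterate_LapA_of_homogeneous (hU : IsOpen U) (hf : ContDiffOn ℝ ∞ f U) {c : ℝ}
    (hX : ∀ q ∈ U, EulerA f q = c * f q) (m : ℕ) :
    ∀ q ∈ U, EulerA (LapA^[m] f) q = (c - 2 * m) * LapA^[m] f q := by
  induction m with
  | zero => simpa using hX
  | succ m ih =>
    intro q hq
    rw [Function.iterate_succ_apply', EulerA_LapA_of_homogeneous hU (hf.iterate_LapA hU m) ih q hq]
    push_cast; ring

theorem iterate_LapA_clm_mul (hU : IsOpen U) (hf : ContDiffOn ℝ ∞ f U) (ℓ : Amb n →L[ℝ] ℝ)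
    (m : ℕ) :
    EqOn (LapA^[m + 1] (fun q => ℓ q * f q))
      (fun q => ℓ q * LapA^[m + 1] f q + 2 * (m + 1) * fderiv ℝ (LapA^[m] f) q (ambGrad ℓ)) U := by
  induction m with
  | zero =>
    intro q hq
    simpa using LapA_clm_mul ℓ ((hf.contDiffAt (hU.mem_nhds hq)).of_le ENat.LEInfty.out)
  | succ m ih =>
    intro q hq
    have hg : ∀ k, ContDiffAt ℝ ∞ (LapA^[k] f) q :=
      contDiffAt_iterate_LapA (hf.contDiffAt (hU.mem_nhds hq))
    rw [Function.iterate_succ_apply', (ih.eventuallyEq_of_mem (hU.mem_nhds hq)).LapA_eq,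
      LapA_add (ℓ.contDiff.contDiffAt.mul ((hg _).of_le ENat.LEInfty.out))
        (contDiffAt_const.mul (((hg m).fderiv_apply_const _).of_le ENat.LEInfty.out)),
      LapA_clm_mul ℓ ((hg _).of_le ENat.LEInfty.out),
      LapA_const_mul _ (((hg m).fderiv_apply_const _).of_le ENat.LEInfty.out),
      LapA_fderiv_comm ((hg m).of_le ENat.LEInfty.out), ← Function.iterate_succ_apply' LapA,
      ← Function.iterate_succ_apply' LapA]
    push_cast; ring

theorem iterate_LapA_fst_mul (hU : IsOpen U) (hf : ContDiffOn ℝ ∞ f U) (m : ℕ) (hp : p ∈ U) :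
    LapA^[m + 1] (fun q => q.1 * f q) p
      = p.1 * LapA^[m + 1] f p + 2 * (m + 1) * ptD (LapA^[m] f) p := by
  have h := iterate_LapA_clm_mul hU hf (ContinuousLinearMap.fst ℝ ℝ _) m hp
  rw [ambGrad_fst] at h
  exact h

theorem iterate_LapA_snd_apply_mul (hU : IsOpen U) (hf : ContDiffOn ℝ ∞ f U) (i : Fin (n + 1))
    (m : ℕ) (hp : p ∈ U) :
    LapA^[m + 1] (fun q => q.2 i * f q) p
      = p.2 i * LapA^[m + 1] f p - 2 * (m + 1) * pxD i (LapA^[m] f) p := by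
  have h := iterate_LapA_clm_mul hU hf
    ((ContinuousLinearMap.proj i).comp (ContinuousLinearMap.snd ℝ ℝ _)) m hp
  simp only [ambGrad_proj_comp_snd, map_neg, mul_neg, ← sub_eq_add_neg] at h
  exact h

end Ambient

theorem stmt_9_general (n k : ℕ)
    (f : Amb n → ℝ) (hf : ContDiffOn ℝ (⊤ : ℕ∞) f (HS n))
    (hhom : ∀ p ∈ HS n, EulerA f p = -(((n:ℝ) - 2*(k:ℝ) + 2)/2) * f p)
    (p : Amb n) (hpt : p.1 = 1) (hpx : ∑ i, (p.2 i)^2 = 1) :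
    ∑ i, p.2 i * (p.1 * LapA^[k] (fun q => q.2 i * f q) p
        - p.2 i * LapA^[k] (fun q => q.1 * f q) p)
      = (k:ℝ) * ((n:ℝ) + 2*(k:ℝ) - 2) * LapA^[k-1] f p := by
  have hHS : IsOpen (HS n) := isOpen_lt continuous_const continuous_fst
  have hp : p ∈ HS n := by simp [HS, hpt]
  cases k with
  | zero => simp [mul_left_comm]
  | succ m =>
    have hX := EulerA_iterate_LapA_of_homogeneous hHS hf hhom m p hp
    simp only [EulerA, hpt, one_mul] at hX
    have hterm : ∀ i, p.2 i * (p.1 * LapA^[m + 1] (fun q => q.2 i * f q) p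
        - p.2 i * LapA^[m + 1] (fun q => q.1 * f q) p)
        = -(2 * (m + 1)) * (p.2 i * pxD i (LapA^[m] f) p + p.2 i ^ 2 * ptD (LapA^[m] f) p) :=
      fun i => by
        rw [iterate_LapA_snd_apply_mul hHS hf i m hp, iterate_LapA_fst_mul hHS hf m hp, hpt]
        ring
    rw [Finset.sum_congr rfl fun i _ => hterm i, ← Finset.mul_sum, Finset.sum_add_distrib,
      ← Finset.sum_mul, hpx, Nat.add_sub_cancel]
    push_cast at hX ⊢
    linear_combination (-(2 * ((m : ℝ) + 1))) * hX

/-- Example 6.1: `Σᵢ xⁱ[L_{2k}, xⁱ] = k(n+2k−2)·L_{2k−2}` on the round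
sphere, via the flat ambient space: if `f` is smooth on the half-space `{t > 0}` with
`Xf = −((n−2k+2)/2)·f` there, then at every point `p` with `t(p) = 1` and `|x(p)| = 1`,
`Σᵢ xⁱ(t·Δ̃^k(xⁱ·f) − xⁱ·Δ̃^k(t·f)) = k(n+2k−2)·Δ̃^{k−1}f` at `p`. -/
theorem stmt_9 (n k : ℕ) (hn : 1 ≤ n) (hk : 1 ≤ k)
    (f : Amb n → ℝ) (hf : ContDiffOn ℝ (⊤ : ℕ∞) f (HS n))
    (hhom : ∀ p ∈ HS n, EulerA f p = -(((n:ℝ) - 2*(k:ℝ) + 2)/2) * f p)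
    (p : Amb n) (hpt : p.1 = 1) (hpx : ∑ i, (p.2 i)^2 = 1) :
    ∑ i, p.2 i * (p.1 * LapA^[k] (fun q => q.2 i * f q) p
        - p.2 i * LapA^[k] (fun q => q.1 * f q) p)
      = (k:ℝ) * ((n:ℝ) + 2*(k:ℝ) - 2) * LapA^[k-1] f p :=
  stmt_9_general n k f hf hhom p hpt hpx
end

section
/- Let n and k be integers with k ≥ 1 and n ≥ 2k + 3 (so all Gamma arguments below are positive). For all smooth functions u, v on an open subset of ℝ × ℝ^{n+1} one has, identically: Σ_{a+b+c=k} B_{a,b,c}·Δ̃^a((Δ̃^b u)·(Δ̃^c v)) = Σ_{a+b=k} B′_{a,b}·D_{a, −(n−2k+1)/3, −(n−2k−2)/3 − 2b}[Δ̃^b v](u) = Σ_{a+b=k} B″_{a,b}·D_{a, −(n−2k−2)/3, −(n−2k+1)/3 − 2b}[Δ̃^b u](v), where B_{a,b,c} := (k!/(a!·b!·c!))·Γ((n−2k+4)/6 + a+b)·Γ((n−2k−2)/6 + a+c)·Γ((n−2k−2)/6 + b+c)/(Γ((n−2k−2)/6)·Γ((n+4k+4)/6)²), B′_{a,b} :=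 (k!/(a!·b!))·Γ((n−2k+4)/6 + a)·Γ((n−2k−2)/6 + b)²/(Γ((n−2k−2)/6)·Γ((n+4k+4)/6)²), and B″_{a,b} := (k!/(a!·b!))·Γ((n−2k−2)/6 + a)·Γ((n−2k−2)/6 + b)·Γ((n−2k+4)/6 + b)/(Γ((n−2k−2)/6)·Γ((n+4k+4)/6)²). -/
/-- The ascending Pochhammer symbol `P_j(z) = z(z+1)⋯(z+j−1)`. -/
noncomputable def poch (z : ℝ) (j : ℕ) : ℝ := Polynomial.eval z (ascPochhammer ℝ j)

/-- The Case–Yan building block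
`D_{m,w,w′}[f](u) = Σ_{a+b=m} C(m,a)·P_a((n−2m)/2+w)·P_b(−w−w′−(n−2m)/2)·Δ̃^a(f·Δ̃^b u)`. -/
noncomputable def CY {n : ℕ} (m : ℕ) (w w' : ℝ) (f u : Amb n → ℝ) : Amb n → ℝ :=
  fun p => ∑ ab ∈ Finset.HasAntidiagonal.antidiagonal m,
    ((m.choose ab.1 : ℝ) * poch (((n:ℝ) - 2*(m:ℝ))/2 + w) ab.1
      * poch (-w - w' - ((n:ℝ) - 2*(m:ℝ))/2) ab.2)
    * LapA^[ab.1] (fun q => f q * LapA^[ab.2] u q) p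

open Finset Nat

lemma poch_succ (z : ℝ) (j : ℕ) : poch z (j + 1) = poch z j * (z + j) := by
  simp [poch, ascPochhammer_succ_right]

lemma Real.Gamma_add_nat_eq_poch_mul {z : ℝ} (hz : 0 < z) (j : ℕ) :
    Real.Gamma (z + j) = poch z j * Real.Gamma z := by
  induction j with
  | zero => simp [poch]
  | succ j ih =>
    rw [Nat.cast_succ, ← add_assoc, Real.Gamma_add_one (by positivity), ih, poch_succ]
    ring

lemma trinomial_eq_choose_mul (k a b c : ℕ) :
    (k ! : ℝ) / (a ! * b ! * c !) = k ! / ((a + b)! * c !) * (a + b).choose a := by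
  rw [Nat.cast_add_choose]
  field_simp

section Regroup

variable {M : Type*} [AddCommMonoid M]

lemma sum_antidiagonal_antidiagonal_assoc {k : ℕ} {F G : ℕ × ℕ → ℕ × ℕ → M}
    (h : ∀ a b c : ℕ, a + (b + c) = k → F (a, b + c) (b, c) = G (a + b, c) (a, b)) :
    ∑ x ∈ antidiagonal k, ∑ y ∈ antidiagonal x.2, F x y
      = ∑ x ∈ antidiagonal k, ∑ y ∈ antidiagonal x.1, G x y := by
  rw [sum_sigma', sum_sigma']
  refine sum_bij' (fun x _ => ⟨(x.1.1 + x.2.1, x.2.2), (x.1.1, x.2.1)⟩)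
    (fun y _ => ⟨(y.2.1, y.2.2 + y.1.2), (y.2.2, y.1.2)⟩) ?_ ?_ ?_ ?_ ?_
  all_goals
    rintro ⟨⟨_, _⟩, _, _⟩ hx
    simp only [mem_sigma, HasAntidiagonal.mem_antidiagonal, and_true] at hx ⊢
    obtain ⟨hk, rfl⟩ := hx
  · omega
  · omega
  · rfl
  · rfl
  · exact h _ _ _ hk

lemma sum_antidiagonal_antidiagonal_assoc_swap {k : ℕ} {F G : ℕ × ℕ → ℕ × ℕ → M}
    (h : ∀ a b c : ℕ, a + (b + c) = k → F (a, b + c) (b, c) = G (a + c, b) (a, c)) :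
    ∑ x ∈ antidiagonal k, ∑ y ∈ antidiagonal x.2, F x y
      = ∑ x ∈ antidiagonal k, ∑ y ∈ antidiagonal x.1, G x y := by
  simp_rw [← Nat.sum_antidiagonal_swap (f := F _)]
  refine sum_antidiagonal_antidiagonal_assoc fun a c b hk => ?_
  rw [Prod.swap_prod_mk, add_comm c b]
  exact h a b c (by omega)

end Regroup

section Coefficients

variable (n k : ℕ)

noncomputable def coeffB (a b c : ℕ) : ℝ :=
  ((k ! : ℝ) / ((a ! : ℝ) * (b ! : ℝ) * (c ! : ℝ)))
    * Real.Gamma (((n:ℝ) - 2*k + 4)/6 + a + b)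
    * Real.Gamma (((n:ℝ) - 2*k - 2)/6 + a + c)
    * Real.Gamma (((n:ℝ) - 2*k - 2)/6 + b + c)
    / (Real.Gamma (((n:ℝ) - 2*k - 2)/6) * Real.Gamma (((n:ℝ) + 4*k + 4)/6)^2)

noncomputable def coeffB' (a b : ℕ) : ℝ :=
  ((k ! : ℝ) / ((a ! : ℝ) * (b ! : ℝ)))
    * Real.Gamma (((n:ℝ) - 2*k + 4)/6 + a)
    * Real.Gamma (((n:ℝ) - 2*k - 2)/6 + b)^2
    / (Real.Gamma (((n:ℝ) - 2*k - 2)/6) * Real.Gamma (((n:ℝ) + 4*k + 4)/6)^2)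

noncomputable def coeffB'' (a b : ℕ) : ℝ :=
  ((k ! : ℝ) / ((a ! : ℝ) * (b ! : ℝ)))
    * Real.Gamma (((n:ℝ) - 2*k - 2)/6 + a)
    * Real.Gamma (((n:ℝ) - 2*k - 2)/6 + b)
    * Real.Gamma (((n:ℝ) - 2*k + 4)/6 + b)
    / (Real.Gamma (((n:ℝ) - 2*k - 2)/6) * Real.Gamma (((n:ℝ) + 4*k + 4)/6)^2)

noncomputable def cyCoeff (m : ℕ) (w w' : ℝ) (a b : ℕ) : ℝ :=
  (m.choose a : ℝ) * poch (((n:ℝ) - 2*(m:ℝ))/2 + w) a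
    * poch (-w - w' - ((n:ℝ) - 2*(m:ℝ))/2) b

variable {n k}

lemma coeffB_eq_coeffB'_mul_cyCoeff (hnk : 2*k + 3 ≤ n) {a b c : ℕ} (h : a + (b + c) = k) :
    coeffB n k a b c = coeffB' n k (a + b) c
      * cyCoeff n (a + b) (-((n:ℝ) - 2*k + 1)/3) (-((n:ℝ) - 2*k - 2)/3 - 2*c) a b := by
  have hk : (a:ℝ) + (b + c) = k := by exact_mod_cast h
  have hn : 2*(k:ℝ) + 3 ≤ n := by exact_mod_cast hnk
  set z := ((n:ℝ) - 2*k - 2)/6 + c with hz_def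
  have hz : 0 < z := by linarith [c.cast_nonneg (α := ℝ)]
  have hw : ((n:ℝ) - 2*((a + b : ℕ) : ℝ))/2 + -((n:ℝ) - 2*k + 1)/3 = z := by push_cast; linarith
  have hw' : -(-((n:ℝ) - 2*k + 1)/3) - (-((n:ℝ) - 2*k - 2)/3 - 2*c)
      - ((n:ℝ) - 2*((a + b : ℕ) : ℝ))/2 = z := by push_cast; linarith
  unfold coeffB coeffB' cyCoeff
  rw [hw, hw', trinomial_eq_choose_mul, Nat.cast_add, ← add_assoc,
    show ((n:ℝ) - 2*k - 2)/6 + a + c = z + a by ring,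
    show ((n:ℝ) - 2*k - 2)/6 + b + c = z + b by ring,
    Real.Gamma_add_nat_eq_poch_mul hz, Real.Gamma_add_nat_eq_poch_mul hz]
  ring

lemma coeffB_eq_coeffB''_mul_cyCoeff (hnk : 2*k + 3 ≤ n) {a b c : ℕ} (h : a + (b + c) = k) :
    coeffB n k a b c = coeffB'' n k (a + c) b
      * cyCoeff n (a + c) (-((n:ℝ) - 2*k - 2)/3) (-((n:ℝ) - 2*k + 1)/3 - 2*b) a c := by
  have hk : (a:ℝ) + (b + c) = k := by exact_mod_cast h
  have hn : 2*(k:ℝ) + 3 ≤ n := by exact_mod_cast hnk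
  set x := ((n:ℝ) - 2*k + 4)/6 + b with hx_def
  set y := ((n:ℝ) - 2*k - 2)/6 + b with hy_def
  have hx : 0 < x := by linarith [b.cast_nonneg (α := ℝ)]
  have hy : 0 < y := by linarith [b.cast_nonneg (α := ℝ)]
  have hw : ((n:ℝ) - 2*((a + c : ℕ) : ℝ))/2 + -((n:ℝ) - 2*k - 2)/3 = x := by push_cast; linarith
  have hw' : -(-((n:ℝ) - 2*k - 2)/3) - (-((n:ℝ) - 2*k + 1)/3 - 2*b)
      - ((n:ℝ) - 2*((a + c : ℕ) : ℝ))/2 = y := by push_cast; linarith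
  unfold coeffB coeffB'' cyCoeff
  rw [hw, hw', mul_right_comm (a ! : ℝ), trinomial_eq_choose_mul, Nat.cast_add, ← add_assoc,
    show ((n:ℝ) - 2*k + 4)/6 + a + b = x + a by ring,
    show ((n:ℝ) - 2*k - 2)/6 + b + c = y + c by ring,
    Real.Gamma_add_nat_eq_poch_mul hx, Real.Gamma_add_nat_eq_poch_mul hy]
  ring

end Coefficients

theorem stmt_13_general (n k : ℕ) (hnk : 2*k + 3 ≤ n)
    (u v : Amb n → ℝ)
    (p : Amb n) :
    (∑ abc ∈ Finset.HasAntidiagonal.antidiagonal k, ∑ bc ∈ Finset.HasAntidiagonal.antidiagonal abc.2,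
        (((k.factorial : ℝ)
            / ((abc.1.factorial : ℝ) * (bc.1.factorial : ℝ) * (bc.2.factorial : ℝ)))
          * Real.Gamma (((n:ℝ) - 2*k + 4)/6 + abc.1 + bc.1)
          * Real.Gamma (((n:ℝ) - 2*k - 2)/6 + abc.1 + bc.2)
          * Real.Gamma (((n:ℝ) - 2*k - 2)/6 + bc.1 + bc.2)
          / (Real.Gamma (((n:ℝ) - 2*k - 2)/6) * Real.Gamma (((n:ℝ) + 4*k + 4)/6)^2))
        * LapA^[abc.1] (fun q => LapA^[bc.1] u q * LapA^[bc.2] v q) p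
      = ∑ ab ∈ Finset.HasAntidiagonal.antidiagonal k,
          (((k.factorial : ℝ) / ((ab.1.factorial : ℝ) * (ab.2.factorial : ℝ)))
            * Real.Gamma (((n:ℝ) - 2*k + 4)/6 + ab.1)
            * Real.Gamma (((n:ℝ) - 2*k - 2)/6 + ab.2)^2
            / (Real.Gamma (((n:ℝ) - 2*k - 2)/6) * Real.Gamma (((n:ℝ) + 4*k + 4)/6)^2))
          * CY ab.1 (-((n:ℝ) - 2*k + 1)/3) (-((n:ℝ) - 2*k - 2)/3 - 2*ab.2)
              (LapA^[ab.2] v) u p)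
    ∧ (∑ abc ∈ Finset.HasAntidiagonal.antidiagonal k, ∑ bc ∈ Finset.HasAntidiagonal.antidiagonal abc.2,
        (((k.factorial : ℝ)
            / ((abc.1.factorial : ℝ) * (bc.1.factorial : ℝ) * (bc.2.factorial : ℝ)))
          * Real.Gamma (((n:ℝ) - 2*k + 4)/6 + abc.1 + bc.1)
          * Real.Gamma (((n:ℝ) - 2*k - 2)/6 + abc.1 + bc.2)
          * Real.Gamma (((n:ℝ) - 2*k - 2)/6 + bc.1 + bc.2)
          / (Real.Gamma (((n:ℝ) - 2*k - 2)/6) * Real.Gamma (((n:ℝ) + 4*k + 4)/6)^2))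
        * LapA^[abc.1] (fun q => LapA^[bc.1] u q * LapA^[bc.2] v q) p
      = ∑ ab ∈ Finset.HasAntidiagonal.antidiagonal k,
          (((k.factorial : ℝ) / ((ab.1.factorial : ℝ) * (ab.2.factorial : ℝ)))
            * Real.Gamma (((n:ℝ) - 2*k - 2)/6 + ab.1)
            * Real.Gamma (((n:ℝ) - 2*k - 2)/6 + ab.2)
            * Real.Gamma (((n:ℝ) - 2*k + 4)/6 + ab.2)
            / (Real.Gamma (((n:ℝ) - 2*k - 2)/6) * Real.Gamma (((n:ℝ) + 4*k + 4)/6)^2))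
          * CY ab.1 (-((n:ℝ) - 2*k - 2)/3) (-((n:ℝ) - 2*k + 1)/3 - 2*ab.2)
              (LapA^[ab.2] u) v p) := by
  constructor
  · simp only [CY, mul_sum]
    refine sum_antidiagonal_antidiagonal_assoc fun a b c h => ?_
    change coeffB n k a b c * _ = coeffB' n k (a + b) c * (cyCoeff n (a + b) _ _ a b * _)
    rw [coeffB_eq_coeffB'_mul_cyCoeff hnk h]
    simp only [mul_comm (LapA^[c] v _)]
    ring
  · simp only [CY, mul_sum]
    refine sum_antidiagonal_antidiagonal_assoc_swap fun a b c h => ?_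
    change coeffB n k a b c * _ = coeffB'' n k (a + c) b * (cyCoeff n (a + c) _ _ a c * _)
    rw [coeffB_eq_coeffB''_mul_cyCoeff hnk h]
    ring

/-- the two displayed identities of Example 3.4, the operators `D̃′_{2k}`:
for `k ≥ 1`, `n ≥ 2k+3`, and smooth `u, v` on an open set,
`Σ_{a+b+c=k} B_{a,b,c}·Δ̃^a((Δ̃^b u)(Δ̃^c v))
  = Σ_{a+b=k} B′_{a,b}·D_{a,−(n−2k+1)/3,−(n−2k−2)/3−2b}[Δ̃^b v](u)
  = Σ_{a+b=k} B″_{a,b}·D_{a,−(n−2k−2)/3,−(n−2k+1)/3−2b}[Δ̃^b u](v)`. -/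
theorem stmt_13 (n k : ℕ) (hk : 1 ≤ k) (hnk : 2*k + 3 ≤ n)
    (U : Set (Amb n)) (hU : IsOpen U) (u v : Amb n → ℝ)
    (hu : ContDiffOn ℝ (⊤ : ℕ∞) u U) (hv : ContDiffOn ℝ (⊤ : ℕ∞) v U)
    (p : Amb n) (hp : p ∈ U) :
    (∑ abc ∈ Finset.HasAntidiagonal.antidiagonal k, ∑ bc ∈ Finset.HasAntidiagonal.antidiagonal abc.2,
        (((k.factorial : ℝ)
            / ((abc.1.factorial : ℝ) * (bc.1.factorial : ℝ) * (bc.2.factorial : ℝ)))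
          * Real.Gamma (((n:ℝ) - 2*k + 4)/6 + abc.1 + bc.1)
          * Real.Gamma (((n:ℝ) - 2*k - 2)/6 + abc.1 + bc.2)
          * Real.Gamma (((n:ℝ) - 2*k - 2)/6 + bc.1 + bc.2)
          / (Real.Gamma (((n:ℝ) - 2*k - 2)/6) * Real.Gamma (((n:ℝ) + 4*k + 4)/6)^2))
        * LapA^[abc.1] (fun q => LapA^[bc.1] u q * LapA^[bc.2] v q) p
      = ∑ ab ∈ Finset.HasAntidiagonal.antidiagonal k,
          (((k.factorial : ℝ) / ((ab.1.factorial : ℝ) * (ab.2.factorial : ℝ)))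
            * Real.Gamma (((n:ℝ) - 2*k + 4)/6 + ab.1)
            * Real.Gamma (((n:ℝ) - 2*k - 2)/6 + ab.2)^2
            / (Real.Gamma (((n:ℝ) - 2*k - 2)/6) * Real.Gamma (((n:ℝ) + 4*k + 4)/6)^2))
          * CY ab.1 (-((n:ℝ) - 2*k + 1)/3) (-((n:ℝ) - 2*k - 2)/3 - 2*ab.2)
              (LapA^[ab.2] v) u p)
    ∧ (∑ abc ∈ Finset.HasAntidiagonal.antidiagonal k, ∑ bc ∈ Finset.HasAntidiagonal.antidiagonal abc.2,
        (((k.factorial : ℝ)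
            / ((abc.1.factorial : ℝ) * (bc.1.factorial : ℝ) * (bc.2.factorial : ℝ)))
          * Real.Gamma (((n:ℝ) - 2*k + 4)/6 + abc.1 + bc.1)
          * Real.Gamma (((n:ℝ) - 2*k - 2)/6 + abc.1 + bc.2)
          * Real.Gamma (((n:ℝ) - 2*k - 2)/6 + bc.1 + bc.2)
          / (Real.Gamma (((n:ℝ) - 2*k - 2)/6) * Real.Gamma (((n:ℝ) + 4*k + 4)/6)^2))
        * LapA^[abc.1] (fun q => LapA^[bc.1] u q * LapA^[bc.2] v q) p
      = ∑ ab ∈ Finset.HasAntidiagonal.antidiagonal k,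
          (((k.factorial : ℝ) / ((ab.1.factorial : ℝ) * (ab.2.factorial : ℝ)))
            * Real.Gamma (((n:ℝ) - 2*k - 2)/6 + ab.1)
            * Real.Gamma (((n:ℝ) - 2*k - 2)/6 + ab.2)
            * Real.Gamma (((n:ℝ) - 2*k + 4)/6 + ab.2)
            / (Real.Gamma (((n:ℝ) - 2*k - 2)/6) * Real.Gamma (((n:ℝ) + 4*k + 4)/6)^2))
          * CY ab.1 (-((n:ℝ) - 2*k - 2)/3) (-((n:ℝ) - 2*k + 1)/3 - 2*ab.2)
              (LapA^[ab.2] u) v p) :=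
  stmt_13_general n k hnk u v p
end
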